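/- Given an MDP M̄ constructed by aggregating states of a finite MDP M into clusters of d̃-diameter at most 2ε (where d̃ is the π*-bisimulation metric with parameter c ∈ [γ,1)), and an encoder φ mapping states of M to clusters, the optimal value functions satisfy |V*(s) − V̄*(φ(s))| ≤ 2ε/((1−γ)(1−c)) for every state s. -/

import Mathlib

open Finset

structure IsPseudometric {S : Type*} (d : S → S → ℝ) : Prop where
  nonneg : ∀ x y, 0 ≤ d x y
  refl : ∀ x, d x x = 0
  symm : ∀ x y, d x y = d y x
  triangle : ∀ x y z, d x z ≤ d x y + d y z

def IsProb {S : Type*} [Fintype S] (p : S → ℝ) : Prop :=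
  (∀ s, 0 ≤ p s) ∧ ∑ s, p s = 1

def IsCoupling {S : Type*} [Fintype S] (γ : S → S → ℝ) (p q : S → ℝ) : Prop :=
  (∀ x y, 0 ≤ γ x y) ∧ (∀ x, ∑ y, γ x y = p x) ∧ (∀ y, ∑ x, γ x y = q y)

noncomputable def W1 {S : Type*} [Fintype S] (d : S → S → ℝ) (p q : S → ℝ) : ℝ :=
  sInf { r | ∃ γ : S → S → ℝ, IsCoupling γ p q ∧ r = ∑ x, ∑ y, d x y * γ x y }

noncomputable def bisimF {S : Type*} [Fintype S] (R : S → ℝ) (P : S → S → ℝ) (c : ℝ)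
    (d : S → S → ℝ) : S → S → ℝ :=
  fun x y => (1 - c) * |R x - R y| + c * W1 d (P x) (P y)

noncomputable def bisimFA {S A : Type*} [Fintype S] [Fintype A] [Nonempty A]
    (R : S → A → ℝ) (P : S → A → S → ℝ) (c : ℝ) (d : S → S → ℝ) : S → S → ℝ :=
  fun x y => ⨆ a : A, ((1 - c) * |R x a - R y a| + c * W1 d (P x a) (P y a))


/-!
The optimal value function `V` is `dt / (1 - c)`-Lipschitz: the Bellman backup turns a
Lipschitz defect `K` into `γ K`, since the reward gap and `c • W1` are both dominated by `dt`
and `γ ≤ c`. Hence, within a cluster of diameter `2ε`, the one-step lookahead values of `V`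
at two states differ by at most `2ε / (1 - c)`. The aggregated backup is the cluster average
of the lookahead values of `Vbar ∘ φ`, and these differ from those of `V` by at most `γ D`,
where `D` is the largest gap `|V - Vbar ∘ φ|`. So `D ≤ 2ε / (1 - c) + γ D`.
-/

open scoped BigOperators

section Kantorovich

variable {S : Type*} [Fintype S] {p q : S → ℝ}

lemma IsProb.isCoupling_mul (hp : IsProb p) (hq : IsProb q) :
    IsCoupling (fun x y => p x * q y) p q :=
  ⟨fun x y => mul_nonneg (hp.1 x) (hq.1 y), fun x => by rw [← mul_sum, hq.2, mul_one],
    fun y => by rw [← sum_mul, hp.2, one_mul]⟩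

lemma IsCoupling.sum_mul_sub_sum_mul {γ : S → S → ℝ} (hγ : IsCoupling γ p q) (h : S → ℝ) :
    ∑ x, p x * h x - ∑ y, q y * h y = ∑ x, ∑ y, γ x y * (h x - h y) := by
  simp only [mul_sub, sum_sub_distrib, ← sum_mul, hγ.2.1]
  rw [sum_comm (f := fun x y => γ x y * h y)]
  simp only [← sum_mul, hγ.2.2]

lemma W1_nonneg {d : S → S → ℝ} (hd : ∀ x y, 0 ≤ d x y) (hp : IsProb p) (hq : IsProb q) :
    0 ≤ W1 d p q :=
  le_csInf ⟨_, _, hp.isCoupling_mul hq, rfl⟩ <| by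
    rintro _ ⟨γ, hγ, rfl⟩
    exact sum_nonneg fun x _ => sum_nonneg fun y _ => mul_nonneg (hd x y) (hγ.1 x y)

/-- The easy half of Kantorovich duality, up to an additive slack `K`. -/
lemma abs_sum_mul_sub_sum_mul_le_W1 {d : S → S → ℝ} {h : S → ℝ} {K : ℝ}
    (hh : ∀ x y, |h x - h y| ≤ d x y + K) (hp : IsProb p) (hq : IsProb q) :
    |∑ x, p x * h x - ∑ y, q y * h y| ≤ W1 d p q + K := by
  rw [← sub_le_iff_le_add]
  refine le_csInf ⟨_, _, hp.isCoupling_mul hq, rfl⟩ ?_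
  rintro _ ⟨γ, hγ, rfl⟩
  have hmass : ∑ x, ∑ y, γ x y = 1 := by simp only [hγ.2.1, hp.2]
  rw [sub_le_iff_le_add, hγ.sum_mul_sub_sum_mul]
  calc |∑ x, ∑ y, γ x y * (h x - h y)|
      ≤ ∑ x, ∑ y, γ x y * |h x - h y| := by
        refine (abs_sum_le_sum_abs _ _).trans (sum_le_sum fun x _ => ?_)
        refine (abs_sum_le_sum_abs _ _).trans (sum_le_sum fun y _ => ?_)
        rw [abs_mul, abs_of_nonneg (hγ.1 x y)]
    _ ≤ ∑ x, ∑ y, γ x y * (d x y + K) :=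
        sum_le_sum fun x _ => sum_le_sum fun y _ =>
          mul_le_mul_of_nonneg_left (hh x y) (hγ.1 x y)
    _ = ∑ x, ∑ y, d x y * γ x y + K := by
        simp only [mul_add, sum_add_distrib, ← sum_mul, hmass, one_mul,
          mul_comm (γ _ _) (d _ _)]

lemma IsProb.abs_sum_mul_le (hp : IsProb p) {f : S → ℝ} {D : ℝ} (hf : ∀ x, |f x| ≤ D) :
    |∑ x, p x * f x| ≤ D :=
  calc |∑ x, p x * f x| ≤ ∑ x, p x * D := by
        refine (abs_sum_le_sum_abs _ _).trans (sum_le_sum fun x _ => ?_)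
        rw [abs_mul, abs_of_nonneg (hp.1 x)]
        exact mul_le_mul_of_nonneg_left (hf x) (hp.1 x)
    _ = D := by rw [← sum_mul, hp.2, one_mul]

end Kantorovich

lemma abs_ciSup_sub_ciSup_le {ι : Type*} [Finite ι] [Nonempty ι] {f g : ι → ℝ} {B : ℝ}
    (h : ∀ i, |f i - g i| ≤ B) : |(⨆ i, f i) - ⨆ i, g i| ≤ B := by
  rw [abs_sub_le_iff, sub_le_iff_le_add, sub_le_iff_le_add]
  constructor
  · refine ciSup_le fun i => ?_
    linarith [(abs_sub_le_iff.1 (h i)).1, le_ciSup (Finite.bddAbove_range g) i]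
  · refine ciSup_le fun i => ?_
    linarith [(abs_sub_le_iff.1 (h i)).2, le_ciSup (Finite.bddAbove_range f) i]

lemma abs_sub_expect_le {ι : Type*} {s : Finset ι} (hs : s.Nonempty) {f : ι → ℝ} {x B : ℝ}
    (h : ∀ i ∈ s, |x - f i| ≤ B) : |x - 𝔼 i ∈ s, f i| ≤ B := by
  rw [← expect_const hs x, ← expect_sub_distrib]
  exact (abs_expect_le _ _).trans (expect_le hs h)

section Bellman

variable {S A : Type*} [Fintype S]

def bellmanQ (R : S → A → ℝ) (P : S → A → S → ℝ) (γ : ℝ) (h : S → ℝ) (s : S) (a : A) : ℝ :=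
  R s a + γ * ∑ s', P s a s' * h s'

variable {R : S → A → ℝ} {P : S → A → S → ℝ} {γ : ℝ}

lemma abs_bellmanQ_sub_bellmanQ_le (hP : ∀ s a, IsProb (P s a)) (hγ0 : 0 ≤ γ)
    {h h' : S → ℝ} {D : ℝ} (hD : ∀ s, |h s - h' s| ≤ D) (s : S) (a : A) :
    |bellmanQ R P γ h s a - bellmanQ R P γ h' s a| ≤ γ * D := by
  have hdiff : bellmanQ R P γ h s a - bellmanQ R P γ h' s a
      = γ * ∑ s', P s a s' * (h s' - h' s') := by
    simp only [bellmanQ, mul_sub, sum_sub_distrib]; ring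
  rw [hdiff, abs_mul, abs_of_nonneg hγ0]
  exact mul_le_mul_of_nonneg_left ((hP s a).abs_sum_mul_le hD) hγ0

variable [Fintype A] [Nonempty A] {c : ℝ} {dt : S → S → ℝ}

lemma le_of_bisimFA_eq_self (hfix : bisimFA R P c dt = dt) (x y : S) (a : A) :
    (1 - c) * |R x a - R y a| + c * W1 dt (P x a) (P y a) ≤ dt x y := by
  conv_rhs => rw [← hfix]
  exact le_ciSup (Finite.bddAbove_range fun a =>
    (1 - c) * |R x a - R y a| + c * W1 dt (P x a) (P y a)) a

lemma bellmanQ_lipschitz (hP : ∀ s a, IsProb (P s a)) (hγ0 : 0 ≤ γ) (hγc : γ ≤ c)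
    (hc1 : c ≤ 1) (hdt : ∀ x y, 0 ≤ dt x y) (hfix : bisimFA R P c dt = dt)
    {h : S → ℝ} {K : ℝ} (hh : ∀ x y, (1 - c) * |h x - h y| ≤ dt x y + K) (x y : S) (a : A) :
    (1 - c) * |bellmanQ R P γ h x a - bellmanQ R P γ h y a| ≤ dt x y + γ * K := by
  have hc : 0 ≤ 1 - c := by linarith
  set ΔE := ∑ s', P x a s' * h s' - ∑ s', P y a s' * h s'
  have hE : (1 - c) * |ΔE| ≤ W1 dt (P x a) (P y a) + K := by
    have := abs_sum_mul_sub_sum_mul_le_W1 (h := fun s => (1 - c) * h s)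
      (fun x y => by rw [← mul_sub, abs_mul, abs_of_nonneg hc]; exact hh x y) (hP x a) (hP y a)
    simpa only [mul_left_comm _ (1 - c), ← mul_sum, ← mul_sub, abs_mul, abs_of_nonneg hc]
      using this
  have hW := W1_nonneg hdt (hP x a) (hP y a)
  have hQ : bellmanQ R P γ h x a - bellmanQ R P γ h y a = (R x a - R y a) + γ * ΔE := by
    simp only [bellmanQ, ΔE]; ring
  calc (1 - c) * |bellmanQ R P γ h x a - bellmanQ R P γ h y a|
      ≤ (1 - c) * |R x a - R y a| + γ * ((1 - c) * |ΔE|) := by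
        rw [hQ, mul_left_comm, ← abs_of_nonneg hγ0, ← abs_mul, abs_of_nonneg hγ0, ← mul_add]
        exact mul_le_mul_of_nonneg_left (abs_add_le _ _) hc
    _ ≤ (1 - c) * |R x a - R y a| + c * W1 dt (P x a) (P y a) + γ * K := by
        nlinarith [mul_le_mul_of_nonneg_left hE hγ0, mul_le_mul_of_nonneg_right hγc hW]
    _ ≤ dt x y + γ * K := by linarith [le_of_bisimFA_eq_self hfix x y a]

/-- `K` below is the worst violation of the Lipschitz bound; the contraction
`bellmanQ_lipschitz` gives `K ≤ γ K`, hence `K ≤ 0`. -/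
lemma optimal_value_lipschitz (hP : ∀ s a, IsProb (P s a)) (hγ0 : 0 ≤ γ) (hγc : γ ≤ c)
    (hc1 : c < 1) (hdt : ∀ x y, 0 ≤ dt x y) (hfix : bisimFA R P c dt = dt)
    {V : S → ℝ} (hV : ∀ s, V s = ⨆ a, bellmanQ R P γ V s a) (x y : S) :
    (1 - c) * |V x - V y| ≤ dt x y := by
  have hc : 0 < 1 - c := by linarith
  have : Nonempty (S × S) := ⟨(x, y)⟩
  obtain ⟨⟨x₀, y₀⟩, hmax⟩ :=
    Finite.exists_max fun st : S × S => (1 - c) * |V st.1 - V st.2| - dt st.1 st.2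
  set K := (1 - c) * |V x₀ - V y₀| - dt x₀ y₀
  have hK : ∀ x y, (1 - c) * |V x - V y| ≤ dt x y + K := fun x y => by
    linarith [hmax (x, y)]
  have hcontr : (1 - c) * |V x₀ - V y₀| ≤ dt x₀ y₀ + γ * K := by
    rw [hV x₀, hV y₀, ← le_div_iff₀' hc]
    exact abs_ciSup_sub_ciSup_le fun a => (le_div_iff₀' hc).2 <|
      bellmanQ_lipschitz hP hγ0 hγc hc1.le hdt hfix hK x₀ y₀ a
  nlinarith [hK x y]

end Bellman

section Aggregation

variable {S Z A : Type*} [Fintype S] [Fintype Z] [DecidableEq Z]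

lemma sum_sum_fiber_mul (φ : S → Z) (p : S → ℝ) (W : Z → ℝ) :
    ∑ z, (∑ s ∈ univ.filter (fun s => φ s = z), p s) * W z = ∑ s, p s * W (φ s) := by
  simp only [sum_mul]
  rw [← sum_fiberwise univ φ]
  refine sum_congr rfl fun z _ => sum_congr rfl fun s hs => ?_
  rw [(mem_filter.1 hs).2]

lemma aggregated_bellmanQ_eq_expect {A : Type*}
    {R : S → A → ℝ} {P : S → A → S → ℝ} {φ : S → Z} {Rbar : Z → A → ℝ} {Pbar : Z → A → Z → ℝ}
    (hRbar : ∀ z a, Rbar z a =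
      (∑ s ∈ univ.filter (fun s => φ s = z), R s a) / (univ.filter (fun s => φ s = z)).card)
    (hPbar : ∀ z a z', Pbar z a z' =
      (∑ s ∈ univ.filter (fun s => φ s = z),
        ∑ s' ∈ univ.filter (fun s' => φ s' = z'), P s a s') /
        (univ.filter (fun s => φ s = z)).card)
    (γ : ℝ) (W : Z → ℝ) (z : Z) (a : A) :
    bellmanQ Rbar Pbar γ W z a =
      𝔼 u ∈ univ.filter (fun s => φ s = z), bellmanQ R P γ (fun s => W (φ s)) u a := by
  have hE : ∑ z', Pbar z a z' * W z' =
      (∑ u ∈ univ.filter (fun s => φ s = z), ∑ s', P u a s' * W (φ s')) /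
        (univ.filter (fun s => φ s = z)).card := by
    simp only [hPbar, div_mul_eq_mul_div, ← sum_div, sum_mul]
    rw [sum_comm]
    simp only [← sum_mul, sum_sum_fiber_mul]
  rw [expect_eq_sum_div_card, bellmanQ, hRbar, hE]
  simp only [bellmanQ, sum_add_distrib, ← mul_sum, add_div, mul_div_assoc]

end Aggregation

theorem stmt_8_general {S Z A : Type*} [Fintype S] [Fintype Z] [Fintype A] [Nonempty A]
    [DecidableEq Z]
    (R : S → A → ℝ) (P : S → A → S → ℝ) (hP : ∀ s a, IsProb (P s a))
    (γ c ε : ℝ) (hγ0 : 0 ≤ γ) (hγc : γ ≤ c) (hc1 : c < 1)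
    (dt : S → S → ℝ) (hdt : IsPseudometric dt) (hfix : bisimFA R P c dt = dt)
    (φ : S → Z) (hφ : Function.Surjective φ)
    (hdiam : ∀ s_i s_j, φ s_i = φ s_j → dt s_i s_j ≤ 2 * ε)
    (Rbar : Z → A → ℝ)
    (hRbar : ∀ z a, Rbar z a =
      (∑ s ∈ univ.filter (fun s => φ s = z), R s a) /
        (univ.filter (fun s => φ s = z)).card)
    (Pbar : Z → A → Z → ℝ)
    (hPbar : ∀ z a z', Pbar z a z' =
      (∑ s ∈ univ.filter (fun s => φ s = z),
        ∑ s' ∈ univ.filter (fun s' => φ s' = z'), P s a s') /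
        (univ.filter (fun s => φ s = z)).card)
    (V : S → ℝ) (hV : ∀ s, V s = ⨆ a : A, (R s a + γ * ∑ s', P s a s' * V s'))
    (Vbar : Z → ℝ)
    (hVbar : ∀ z, Vbar z = ⨆ a : A, (Rbar z a + γ * ∑ z', Pbar z a z' * Vbar z')) :
    ∀ s, |V s - Vbar (φ s)| ≤ 2 * ε / ((1 - γ) * (1 - c)) := by
  have hc : 0 < 1 - c := by linarith
  have hLip : ∀ x y, (1 - c) * |V x - V y| ≤ dt x y + 0 := by
    simpa using optimal_value_lipschitz hP hγ0 hγc hc1 hdt.nonneg hfix hV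
  have hstep (D : ℝ) (hD : ∀ s, |V s - Vbar (φ s)| ≤ D) (s : S) :
      |V s - Vbar (φ s)| ≤ 2 * ε / (1 - c) + γ * D := by
    rw [hV s, hVbar (φ s)]
    refine abs_ciSup_sub_ciSup_le fun a => ?_
    rw [← bellmanQ, ← bellmanQ, aggregated_bellmanQ_eq_expect hRbar hPbar]
    obtain ⟨s', hs'⟩ := hφ (φ s)
    refine abs_sub_expect_le ⟨s', mem_filter.2 ⟨mem_univ _, hs'⟩⟩ fun u hu => ?_
    have hR : (1 - c) * |bellmanQ R P γ V s a - bellmanQ R P γ V u a| ≤ 2 * ε := by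
      linarith [bellmanQ_lipschitz hP hγ0 hγc hc1.le hdt.nonneg hfix hLip s u a,
        hdiam s u (mem_filter.1 hu).2.symm]
    exact (abs_sub_le _ (bellmanQ R P γ V u a) _).trans <|
      add_le_add ((le_div_iff₀' hc).2 hR) (abs_bellmanQ_sub_bellmanQ_le hP hγ0 hD u a)
  intro s
  have : Nonempty S := ⟨s⟩
  obtain ⟨s₀, hs₀⟩ := Finite.exists_max fun s => |V s - Vbar (φ s)|
  have hmax := hstep _ hs₀ s₀
  have hγ1 : 0 < 1 - γ := by linarith
  rw [div_add' _ _ _ hc.ne', le_div_iff₀ hc] at hmax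
  refine (hs₀ s).trans ((le_div_iff₀ (mul_pos hγ1 hc)).2 ?_)
  linarith

/-- value bound for the ε-aggregated MDP: the optimal value functions of
the original MDP and of the aggregated MDP (rewards and transitions averaged over
clusters of bisimulation diameter at most 2ε) differ by at most `2ε/((1-γ)(1-c))`. -/
theorem stmt_8 {S Z A : Type*} [Fintype S] [Fintype Z] [Fintype A] [Nonempty A]
    [DecidableEq Z]
    (R : S → A → ℝ) (P : S → A → S → ℝ) (hP : ∀ s a, IsProb (P s a))
    (γ c ε : ℝ) (hγ0 : 0 ≤ γ) (hγc : γ ≤ c) (hc1 : c < 1) (hε : 0 < ε)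
    (dt : S → S → ℝ) (hdt : IsPseudometric dt) (hfix : bisimFA R P c dt = dt)
    (φ : S → Z) (hφ : Function.Surjective φ)
    (hdiam : ∀ s_i s_j, φ s_i = φ s_j → dt s_i s_j ≤ 2 * ε)
    (Rbar : Z → A → ℝ)
    (hRbar : ∀ z a, Rbar z a =
      (∑ s ∈ univ.filter (fun s => φ s = z), R s a) /
        (univ.filter (fun s => φ s = z)).card)
    (Pbar : Z → A → Z → ℝ)
    (hPbar : ∀ z a z', Pbar z a z' =
      (∑ s ∈ univ.filter (fun s => φ s = z),
        ∑ s' ∈ univ.filter (fun s' => φ s' = z'), P s a s') /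
        (univ.filter (fun s => φ s = z)).card)
    (V : S → ℝ) (hV : ∀ s, V s = ⨆ a : A, (R s a + γ * ∑ s', P s a s' * V s'))
    (Vbar : Z → ℝ)
    (hVbar : ∀ z, Vbar z = ⨆ a : A, (Rbar z a + γ * ∑ z', Pbar z a z' * Vbar z')) :
    ∀ s, |V s - Vbar (φ s)| ≤ 2 * ε / ((1 - γ) * (1 - c)) :=
  stmt_8_general R P hP γ c ε hγ0 hγc hc1 dt hdt hfix φ hφ hdiam Rbar hRbar Pbar hPbar V hV Vbar
    hVbar
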